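/- Let B be a real 2×2 matrix with J := det B > 0, a ∈ ℝ², and F(x) := Bx + a. Let â ≠ b̂ in ℝ², set t̂ := (b̂−â)/|b̂−â| and n̂ := R t̂, where R is the rotation of ℝ² by π/2 (R(x,y) := (−y, x)); let a := F(â), b := F(b̂), t := (b−a)/|b−a|, and n := R t. Then the unit normal transforms as n = (J/|B t̂|)·B⁻ᵀ n̂, and for every continuous τ̂ : ℝ² → 𝕊 with re-scaled contravariant Piola–Kirchhoff transform τ (determined by J²·τ(F(x)) = B τ̂(x) Bᵀ) and every continuous q : [0,1] → ℝ, the scaled edge normal-normal moments are conserved: |e|²·∫₀¹ (nᵀ τ(F(γ̂(s))) n)·q(s) ds = |ê|²·∫₀¹ (n̂ᵀ τ̂(γ̂(s)) n̂)·q(s) ds, where γ̂(s) := (1−s)â + s·b̂, |ê| := |b̂−â| and |e| := |b−a|. -/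
import Mathlib


open MeasureTheory Matrix

noncomputable section

/-- Euclidean norm of a vector in `ℝ²`. -/
def enorm2 (v : Fin 2 → ℝ) : ℝ := Real.sqrt (v ⬝ᵥ v)

/-- Rotation of `ℝ²` by `π/2`: `R(x, y) = (−y, x)`. -/
def rot (v : Fin 2 → ℝ) : Fin 2 → ℝ := ![-(v 1), v 0]

lemma rot_smul (c : ℝ) (v : Fin 2 → ℝ) : rot (c • v) = c • rot v := by
  funext i; fin_cases i <;> simp [rot]

lemma enorm2_smul (c : ℝ) (v : Fin 2 → ℝ) : enorm2 (c • v) = |c| * enorm2 v := by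
  unfold enorm2
  rw [smul_dotProduct, dotProduct_smul, smul_eq_mul, smul_eq_mul,
    ← mul_assoc, Real.sqrt_mul (mul_self_nonneg c), Real.sqrt_mul_self_eq_abs]

lemma enorm2_pos (v : Fin 2 → ℝ) (h : v ≠ 0) : 0 < enorm2 v := by
  apply Real.sqrt_pos.mpr
  have h0 : v ⬝ᵥ v ≠ 0 := fun hh => h (dotProduct_self_eq_zero.mp hh)
  have h1 : 0 ≤ v ⬝ᵥ v := Finset.sum_nonneg fun i _ => mul_self_nonneg _
  exact lt_of_le_of_ne h1 (Ne.symm h0)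

lemma rot_key (B : Matrix (Fin 2) (Fin 2) ℝ) (v : Fin 2 → ℝ) :
    Bᵀ.mulVec (rot (B.mulVec v)) = B.det • rot v := by
  funext i; fin_cases i <;>
    simp [Matrix.mulVec, dotProduct, rot, Matrix.det_fin_two, Fin.sum_univ_two] <;> ring

/-- Transformation of unit normals and conservation of scaled edge normal-normal moments
under the re-scaled contravariant Piola–Kirchhoff transform: with `F(x) = Bx + a`,
`n = (det B / |B t̂|) · B⁻ᵀ n̂`, and for any continuous `τ̂` with transform `τ` and any
continuous weight `q`,
`|e|² ∫₀¹ (nᵀ τ(F(γ̂(s))) n) q(s) ds = |ê|² ∫₀¹ (n̂ᵀ τ̂(γ̂(s)) n̂) q(s) ds`. -/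
theorem edge_moment_conservation
    (B : Matrix (Fin 2) (Fin 2) ℝ) (hJ : 0 < B.det) (a : Fin 2 → ℝ)
    (ahat bhat : Fin 2 → ℝ) (hab : ahat ≠ bhat)
    (that nhat tvec nvec : Fin 2 → ℝ)
    (hthat : that = (enorm2 (bhat - ahat))⁻¹ • (bhat - ahat))
    (hnhat : nhat = rot that)
    (htvec : tvec = (enorm2 ((B.mulVec bhat + a) - (B.mulVec ahat + a)))⁻¹ •
      ((B.mulVec bhat + a) - (B.mulVec ahat + a)))
    (hnvec : nvec = rot tvec) :
    nvec = (B.det / enorm2 (B.mulVec that)) • (B⁻¹)ᵀ.mulVec nhat ∧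
    ∀ τhat τ : (Fin 2 → ℝ) → Matrix (Fin 2) (Fin 2) ℝ,
      (∀ k l : Fin 2, Continuous fun y => τhat y k l) →
      (∀ y, (B.det ^ 2) • τ (B.mulVec y + a) = B * τhat y * Bᵀ) →
      ∀ q : ℝ → ℝ, ContinuousOn q (Set.Icc 0 1) →
        enorm2 ((B.mulVec bhat + a) - (B.mulVec ahat + a)) ^ 2 *
          (∫ s in (0:ℝ)..1,
            (nvec ⬝ᵥ (τ (B.mulVec ((1 - s) • ahat + s • bhat) + a)).mulVec nvec) * q s) =
        enorm2 (bhat - ahat) ^ 2 *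
          (∫ s in (0:ℝ)..1,
            (nhat ⬝ᵥ (τhat ((1 - s) • ahat + s • bhat)).mulVec nhat) * q s) := by
  have hJ0 : B.det ≠ 0 := ne_of_gt hJ
  have hBu : IsUnit B.det := isUnit_iff_ne_zero.mpr hJ0
  set dh : Fin 2 → ℝ := bhat - ahat with hdh
  have hdh0 : dh ≠ 0 := sub_ne_zero.mpr (Ne.symm hab)
  set d : Fin 2 → ℝ := B.mulVec dh with hd
  have hsub : (B.mulVec bhat + a) - (B.mulVec ahat + a) = d := by
    rw [add_sub_add_right_eq_sub, ← Matrix.mulVec_sub]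
  have hd0 : d ≠ 0 := by
    intro h
    apply hdh0
    have := congrArg (B⁻¹.mulVec) h
    rwa [Matrix.mulVec_mulVec, Matrix.nonsing_inv_mul B hBu, Matrix.one_mulVec,
      Matrix.mulVec_zero] at this
  have heh : 0 < enorm2 dh := enorm2_pos _ hdh0
  have he : 0 < enorm2 d := enorm2_pos _ hd0
  -- normals in terms of rotated difference vectors
  have hnh : nhat = (enorm2 dh)⁻¹ • rot dh := by rw [hnhat, hthat, rot_smul]
  have hnv : nvec = (enorm2 d)⁻¹ • rot d := by rw [hnvec, htvec, hsub, rot_smul]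
  -- key: Bᵀ (rot d) = det B • rot dh
  have hkey : Bᵀ.mulVec (rot d) = B.det • rot dh := rot_key B dh
  have hinv : (B⁻¹)ᵀ.mulVec (rot dh) = (B.det)⁻¹ • rot d := by
    have h1 : (B⁻¹)ᵀ.mulVec (Bᵀ.mulVec (rot d)) = rot d := by
      rw [Matrix.mulVec_mulVec, ← Matrix.transpose_mul, Matrix.mul_nonsing_inv B hBu,
        Matrix.transpose_one, Matrix.one_mulVec]
    rw [hkey, Matrix.mulVec_smul] at h1
    rw [← h1, smul_smul, inv_mul_cancel₀ hJ0, one_smul]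
  have hBthat : enorm2 (B.mulVec that) = (enorm2 dh)⁻¹ * enorm2 d := by
    rw [hthat, Matrix.mulVec_smul, ← hd, enorm2_smul, abs_of_pos (inv_pos.mpr heh)]
  constructor
  · rw [hnv, hnh, hBthat, Matrix.mulVec_smul, hinv, smul_smul, smul_smul]
    congr 1
    field_simp
  · intro τhat τ _ hPiola q _
    have hpt : ∀ y : Fin 2 → ℝ,
        enorm2 d ^ 2 * (nvec ⬝ᵥ (τ (B.mulVec y + a)).mulVec nvec) =
        enorm2 dh ^ 2 * (nhat ⬝ᵥ (τhat y).mulVec nhat) := by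
      intro y
      have hP := hPiola y
      have hw : rot d ⬝ᵥ (τ (B.mulVec y + a)).mulVec (rot d) =
          rot dh ⬝ᵥ (τhat y).mulVec (rot dh) := by
        have hL : rot d ⬝ᵥ ((B.det ^ 2) • τ (B.mulVec y + a)).mulVec (rot d) =
            B.det ^ 2 * (rot d ⬝ᵥ (τ (B.mulVec y + a)).mulVec (rot d)) := by
          rw [Matrix.smul_mulVec, dotProduct_smul, smul_eq_mul]
        have hR : rot d ⬝ᵥ (B * τhat y * Bᵀ).mulVec (rot d) =
            B.det ^ 2 * (rot dh ⬝ᵥ (τhat y).mulVec (rot dh)) := by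
          rw [← Matrix.mulVec_mulVec, ← Matrix.mulVec_mulVec,
            Matrix.dotProduct_mulVec, ← Matrix.mulVec_transpose, hkey,
            Matrix.mulVec_smul, smul_dotProduct, dotProduct_smul,
            smul_eq_mul, smul_eq_mul, ← mul_assoc, ← sq]
        have h2 : B.det ^ 2 * (rot d ⬝ᵥ (τ (B.mulVec y + a)).mulVec (rot d)) =
            B.det ^ 2 * (rot dh ⬝ᵥ (τhat y).mulVec (rot dh)) := by
          rw [← hL, hP, hR]
        exact mul_left_cancel₀ (pow_ne_zero 2 hJ0) h2
      rw [hnv, hnh]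
      rw [smul_dotProduct, Matrix.mulVec_smul, dotProduct_smul,
        smul_dotProduct, Matrix.mulVec_smul, dotProduct_smul,
        smul_eq_mul, smul_eq_mul, smul_eq_mul, smul_eq_mul, hw]
      field_simp
    rw [hsub, ← intervalIntegral.integral_const_mul, ← intervalIntegral.integral_const_mul]
    apply intervalIntegral.integral_congr
    intro s _
    dsimp
    rw [← mul_assoc, ← mul_assoc, hpt]
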